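/- Let F be a finite field with q = |F| elements, let Φ be a weighted alphabet with A(n) = |{a ∈ Φ : w(a) ≤ n}|, and let n ≤ N be natural numbers. Consider the action of GL(N,F) on functions g : F^N → Φ induced by its action on F^N. Then the number b_n of GL(N,F)-orbits on functions of total weight n satisfies b_n ≤ A(n)^n · (n+1) · q^{⌊n²/4⌋}. -/

import Mathlib

open Matrix MulAction Pointwise

/-- The action of `GL(N,F)` on `F^N` by matrix-vector multiplication. -/
instance glVecAction {F : Type*} [Field F] {N : ℕ} :
    MulAction (GL (Fin N) F) (Fin N → F) where
  smul g v := (g : Matrix (Fin N) (Fin N) F).mulVec v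
  one_smul v := by
    show ((1 : GL (Fin N) F) : Matrix (Fin N) (Fin N) F).mulVec v = v
    simp
  mul_smul g h v := by
    show ((g * h : GL (Fin N) F) : Matrix (Fin N) (Fin N) F).mulVec v
      = (g : Matrix (Fin N) (Fin N) F).mulVec ((h : Matrix (Fin N) (Fin N) F).mulVec v)
    simp [Matrix.mulVec_mulVec]

/-- The induced action of `GL(N,F)` on functions `F^N → Φ`, `(g • f) v = f (g⁻¹ • v)`. -/
instance glFunAction {F : Type*} [Field F] {N : ℕ} {Φ : Type*} :
    MulAction (GL (Fin N) F) ((Fin N → F) → Φ) where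
  smul g f := fun v => f (g⁻¹ • v)
  one_smul f := by
    show (fun v => f ((1 : GL (Fin N) F)⁻¹ • v)) = f
    funext v; simp
  mul_smul g h f := by
    show (fun v => f ((g * h)⁻¹ • v))
      = fun v => (fun u => f (h⁻¹ • u)) (g⁻¹ • v)
    funext v; simp [_root_.mul_inv_rev, SemigroupAction.mul_smul]

/-- The number of orbits of a `G`-action meeting a set `P` of states; for a `G`-invariant
`P` this is the number of orbits of `G` on `P`. -/
noncomputable def numOrbitsOn (G : Type*) {X : Type*} [Group G] [MulAction G X]
    (P : Set X) : ℕ :=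
  Nat.card (Quotient.mk (MulAction.orbitRel G X) '' P)

/-!
A function `f` of total weight `n` is non-vacuous on a set `S` of at most `n` vectors, and `S`
contains a basis `b₁, …, b_k` of its span, so `k ≤ n`. An element of `GL(N,F)` moving `bᵢ` to the
`i`-th standard basis vector turns `f` into a function supported on `F^k ⊆ F^N` that is
non-vacuous at the `k` standard basis vectors. Such a function is determined by its values there
and by the remaining at most `n - k` points of its support in `F^k` together with their values,
so each `k` contributes at most `A(n)^k (q^k A(n))^(n-k) ≤ A(n)^n q^⌊n²/4⌋` orbits.
-/

open Function Module

theorem Module.Basis.sumExtend_inl {K V ι : Type*} [DivisionRing K] [AddCommGroup V]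
    [Module K V] {v : ι → V} (hv : LinearIndependent K v) (i : ι) :
    Basis.sumExtend hv (Sum.inl i) = v i := by
  simp only [Basis.sumExtend, Equiv.trans_def, Basis.coe_reindex, Basis.coe_extend,
    Function.comp_apply]
  rfl

theorem LinearIndependent.exists_linearEquiv_apply_eq {K V ι : Type*} [DivisionRing K]
    [AddCommGroup V] [Module K V] [FiniteDimensional K V] {b c : ι → V}
    (hb : LinearIndependent K b) (hc : LinearIndependent K c) :
    ∃ φ : V ≃ₗ[K] V, ∀ i, φ (b i) = c i := by
  have := hb.finite
  have := Module.Finite.finite_basis (Basis.sumExtend hb)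
  have := Module.Finite.finite_basis (Basis.sumExtend hc)
  have := Finite.of_injective _ (Sum.inr_injective (α := ι) (β := Basis.sumExtendIndex hb))
  have := Finite.of_injective _ (Sum.inr_injective (α := ι) (β := Basis.sumExtendIndex hc))
  have hcard := Nat.card_congr ((Basis.sumExtend hb).indexEquiv (Basis.sumExtend hc))
  rw [Nat.card_sum, Nat.card_sum, Nat.add_left_cancel_iff] at hcard
  obtain ⟨σ⟩ := Finite.card_eq.mp hcard
  refine ⟨(Basis.sumExtend hb).equiv (Basis.sumExtend hc) (Equiv.sumCongr (Equiv.refl ι) σ),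
    fun i => ?_⟩
  rw [← Basis.sumExtend_inl hb, Basis.equiv_apply, Equiv.sumCongr_apply, Sum.map_inl,
    Equiv.refl_apply, Basis.sumExtend_inl]

theorem Matrix.GeneralLinearGroup.exists_inv_smul_eq {R : Type*} [CommRing R] {N : ℕ}
    (φ : (Fin N → R) ≃ₗ[R] (Fin N → R)) : ∃ γ : GL (Fin N) R, ∀ v, γ⁻¹ • v = φ v := by
  refine ⟨(toLin.symm (LinearMap.GeneralLinearGroup.ofLinearEquiv φ))⁻¹, fun v => ?_⟩
  rw [inv_inv]
  show Matrix.mulVec (_ : GL (Fin N) R).val v = φ v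
  rw [← Matrix.mulVecLin_apply, ← GeneralLinearGroup.coe_toLin]
  simp

def zeroExtend (R : Type*) [Semiring R] (k N : ℕ) : (Fin k → R) →ₗ[R] (Fin N → R) where
  toFun x j := if h : (j : ℕ) < k then x ⟨j, h⟩ else 0
  map_add' x y := by ext j; by_cases h : (j : ℕ) < k <;> simp [h]
  map_smul' c x := by ext j; by_cases h : (j : ℕ) < k <;> simp [h]

theorem zeroExtend_injective {R : Type*} [Semiring R] {k N : ℕ} (hk : k ≤ N) :
    Injective (zeroExtend R k N) := fun x y h => funext fun i => by
  simpa [zeroExtend] using congrFun h ⟨i, by omega⟩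

theorem exists_inv_smul_zeroExtend_eq {F : Type*} [Field F] {k N : ℕ} {b : Fin k → Fin N → F}
    (hb : LinearIndependent F b) :
    ∃ γ : GL (Fin N) F, ∀ x, γ⁻¹ • zeroExtend F k N x = Fintype.linearCombination F b x := by
  have hk : k ≤ N := by simpa using hb.fintype_card_le_finrank
  have he : LinearIndependent F (zeroExtend F k N ∘ Pi.basisFun F (Fin k)) :=
    (Pi.basisFun F (Fin k)).linearIndependent.map' _
      (LinearMap.ker_eq_bot.mpr (zeroExtend_injective hk))
  obtain ⟨φ, hφ⟩ := he.exists_linearEquiv_apply_eq hb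
  obtain ⟨γ, hγ⟩ := Matrix.GeneralLinearGroup.exists_inv_smul_eq φ
  refine ⟨γ, fun x => ?_⟩
  rw [hγ]
  show (φ.toLinearMap ∘ₗ zeroExtend F k N) x = _
  congr 1
  exact (Pi.basisFun F (Fin k)).ext fun i => by simpa using hφ i

theorem Set.Finite.exists_linearIndependent_fin {K V : Type*} [DivisionRing K]
    [AddCommGroup V] [Module K V] {S : Set V} (hS : S.Finite) :
    ∃ (k : ℕ) (b : Fin k → V), k ≤ S.ncard ∧ LinearIndependent K b ∧ (∀ i, b i ∈ S) ∧
      S ⊆ Submodule.span K (Set.range b) := by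
  obtain ⟨t, htS, hspan, hli⟩ := exists_linearIndependent K S
  have := (hS.subset htS).to_subtype
  let e := Finite.equivFin t
  have hrange : Set.range (Subtype.val ∘ e.symm) = t := by
    rw [Set.range_comp, e.symm.range_eq_univ, Set.image_univ, Subtype.range_coe]
  refine ⟨Nat.card t, Subtype.val ∘ e.symm, ?_, hli.comp _ e.symm.injective,
    fun i => htS (e.symm i).2, ?_⟩
  · rw [Nat.card_coe_set_eq]
    exact Set.ncard_le_ncard htS hS
  · rw [hrange, hspan]
    exact Submodule.subset_span

theorem orbitRel_extend_of_inv_smul_eq {F Y A : Type*} [Field F] {N : ℕ}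
    {f : (Fin N → F) → Y} {y₀ : Y} {ι L : A → Fin N → F} (hι : Injective ι) {γ : GL (Fin N) F}
    (hγ : ∀ x, γ⁻¹ • ι x = L x) (hf : ∀ v, f v ≠ y₀ → v ∈ Set.range L) :
    MulAction.orbitRel (GL (Fin N) F) _ (extend ι (f ∘ L) fun _ => y₀) f := by
  refine ⟨γ, funext fun v => ?_⟩
  show f (γ⁻¹ • v) = _
  by_cases hv : ∃ x, ι x = v
  · obtain ⟨x, rfl⟩ := hv
    rw [hι.extend_apply, hγ, Function.comp_apply]
  · rw [extend_apply' _ _ _ hv]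
    by_contra hfv
    obtain ⟨x, hx⟩ := hf _ hfv
    exact hv ⟨x, smul_left_cancel _ ((hγ x).trans hx)⟩

section UpdateSeq

variable {X Y : Type*} [DecidableEq X]

def updateSeq (h : X → Y) {m : ℕ} (s : Fin m → X × Y) : X → Y :=
  Fin.foldr m (fun j g => update g (s j).1 (s j).2) h

theorem updateSeq_cons (h : X → Y) {m : ℕ} (p : X × Y) (s : Fin m → X × Y) :
    updateSeq h (Fin.cons p s) = update (updateSeq h s) p.1 p.2 := by
  simp [updateSeq, Fin.foldr_succ]

theorem exists_updateSeq_eq [Finite X] [Nonempty X] (h : X → Y) :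
    ∀ {m : ℕ} {g : X → Y}, {x | g x ≠ h x}.ncard ≤ m → ∃ s : Fin m → X × Y, updateSeq h s = g
  | 0, g, hg => by
    have hD := (Set.ncard_eq_zero (Set.toFinite _)).1 (Nat.le_zero.1 hg)
    refine ⟨Fin.elim0, funext fun x => ?_⟩
    simp only [updateSeq, Fin.foldr_zero]
    by_contra hx
    exact Set.eq_empty_iff_forall_notMem.1 hD x (Ne.symm hx)
  | m + 1, g, hg => by
    obtain ⟨x, hx⟩ : ∃ x, ({x | g x ≠ h x} \ {x}).ncard ≤ m := by
      rcases Set.eq_empty_or_nonempty {x | g x ≠ h x} with hD | ⟨x, hx⟩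
      · exact ⟨Classical.arbitrary X, by simp [hD]⟩
      · exact ⟨x, by rw [Set.ncard_sdiff_singleton_of_mem hx]; omega⟩
    have hupd : {y | update g x (h x) y ≠ h y} = {y | g y ≠ h y} \ {x} := by
      ext y
      by_cases hy : y = x <;> simp [hy]
    obtain ⟨s, hs⟩ := exists_updateSeq_eq h (hupd ▸ hx)
    exact ⟨Fin.cons (x, g x) s, by rw [updateSeq_cons, hs, update_idem, update_eq_self]⟩

end UpdateSeq

theorem ncard_ne_extend_add_le {X Y : Type*} [Finite X] {k : ℕ} {e : Fin k → X} (he : Injective e)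
    {g : X → Y} {y₀ : Y} (hg : ∀ i, g (e i) ≠ y₀) :
    {x | g x ≠ extend e (g ∘ e) (fun _ => y₀) x}.ncard + k ≤ {x | g x ≠ y₀}.ncard := by
  have hrange : Set.range e ⊆ {x | g x ≠ y₀} := Set.range_subset_iff.2 hg
  have hsub : {x | g x ≠ extend e (g ∘ e) (fun _ => y₀) x} ⊆ {x | g x ≠ y₀} \ Set.range e := by
    intro x hx
    by_cases hxe : ∃ i, e i = x
    · obtain ⟨i, rfl⟩ := hxe
      exact absurd (he.extend_apply (g ∘ e) _ i).symm hx
    · rw [Set.mem_ofPred_eq, extend_apply' _ _ _ hxe] at hx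
      exact ⟨hx, hxe⟩
  have hcard := Set.ncard_le_ncard hsub (Set.toFinite _)
  have hk := Set.ncard_le_ncard hrange (Set.toFinite _)
  rw [Set.ncard_sdiff hrange] at hcard
  rw [Set.ncard_range_of_injective he, Nat.card_fin] at hcard hk
  omega

section NormalForm

variable {F Y : Type*} [Field F] [DecidableEq F]

noncomputable def normalForm (N : ℕ) (y₀ : Y) {k m : ℕ} (a : Fin k → Y)
    (s : Fin m → (Fin k → F) × Y) : (Fin N → F) → Y :=
  extend (zeroExtend F k N) (updateSeq (extend (Pi.basisFun F (Fin k)) a fun _ => y₀) s) fun _ => y₀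

theorem exists_orbitRel_normalForm [Finite F] {N n : ℕ} {f : (Fin N → F) → Y} {y₀ : Y}
    (hf : {v | f v ≠ y₀}.ncard ≤ n) :
    ∃ k ≤ n, ∃ (a : Fin k → Y) (s : Fin (n - k) → (Fin k → F) × Y),
      MulAction.orbitRel (GL (Fin N) F) _ (normalForm N y₀ a s) f := by
  obtain ⟨k, b, hkS, hb, hbS, hSb⟩ :=
    (Set.toFinite {v | f v ≠ y₀}).exists_linearIndependent_fin (K := F)
  obtain ⟨γ, hγ⟩ := exists_inv_smul_zeroExtend_eq hb
  have hk : k ≤ N := by simpa using hb.fintype_card_le_finrank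
  set L := Fintype.linearCombination F b
  have hrange : ∀ v, f v ≠ y₀ → v ∈ Set.range L := fun v hv => by
    rw [← LinearMap.coe_range, Fintype.range_linearCombination]
    exact hSb hv
  have hrel := orbitRel_extend_of_inv_smul_eq (zeroExtend_injective hk) hγ hrange
  set e := Pi.basisFun F (Fin k)
  set g := f ∘ L
  have hge : ∀ i, g (e i) ≠ y₀ := fun i => by
    simpa [g, e, L, Fintype.linearCombination_apply_single] using hbS i
  have hdiff := ncard_ne_extend_add_le e.injective hge
  have hsupp : {x | g x ≠ y₀}.ncard ≤ {v | f v ≠ y₀}.ncard :=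
    Set.ncard_le_ncard_of_injOn L (fun _ hx => hx) hb.fintypeLinearCombination_injective.injOn
  obtain ⟨s, hs⟩ := exists_updateSeq_eq (m := n - k) (extend e (g ∘ e) fun _ => y₀) (g := g)
    (by omega)
  refine ⟨k, by omega, g ∘ e, s, ?_⟩
  rwa [normalForm, hs]

end NormalForm

theorem numOrbitsOn_le_card {G X T : Type*} [Group G] [MulAction G X] [Finite T] {P : Set X}
    (r : T → X) (h : ∀ x ∈ P, ∃ t, MulAction.orbitRel G X (r t) x) :
    numOrbitsOn G P ≤ Nat.card T := by
  refine (Nat.card_mono (Set.finite_range (Quotient.mk _ ∘ r)) ?_).trans (Finite.card_range_le _)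
  rintro _ ⟨x, hx, rfl⟩
  obtain ⟨t, ht⟩ := h x hx
  exact ⟨t, Quotient.sound ht⟩

theorem orbitRel_comp {F Y Z : Type*} [Field F] {N : ℕ} {f g : (Fin N → F) → Y} (φ : Y → Z)
    (h : MulAction.orbitRel (GL (Fin N) F) _ f g) :
    MulAction.orbitRel (GL (Fin N) F) _ (φ ∘ f) (φ ∘ g) := by
  obtain ⟨γ, rfl⟩ := h
  exact ⟨γ, rfl⟩

theorem ncard_ne_le_sum {X Φ : Type*} [Fintype X] {w : Φ → ℕ} {vac : Φ}
    (hvac : ∀ a, w a = 0 ↔ a = vac) (f : X → Φ) :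
    {x | f x ≠ vac}.ncard ≤ ∑ x, w (f x) := by
  classical
  rw [Set.ncard_eq_toFinset_card']
  calc _ = ∑ x ∈ Finset.univ.filter (f · ≠ vac), 1 := by simp
    _ ≤ ∑ x ∈ Finset.univ.filter (f · ≠ vac), w (f x) := Finset.sum_le_sum fun x hx =>
      Nat.one_le_iff_ne_zero.2 fun h => (Finset.mem_filter.1 hx).2 ((hvac _).1 h)
    _ ≤ ∑ x, w (f x) := Finset.sum_le_sum_of_subset (Finset.filter_subset _ _)

theorem mul_sub_le_sq_div_four {k n : ℕ} (hk : k ≤ n) : k * (n - k) ≤ n ^ 2 / 4 := by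
  obtain ⟨m, rfl⟩ := Nat.exists_eq_add_of_le hk
  rw [Nat.le_div_iff_mul_le (by norm_num), Nat.add_sub_cancel_left]
  nlinarith [sq_nonneg ((k : ℤ) - m)]

theorem sum_pow_mul_pow_sub_le (A q n : ℕ) (hq : 0 < q) :
    ∑ k : Fin (n + 1), A ^ (k : ℕ) * (q ^ (k : ℕ) * A) ^ (n - k) ≤
      A ^ n * ((n + 1) * q ^ (n ^ 2 / 4)) := by
  calc _ ≤ ∑ _k : Fin (n + 1), A ^ n * q ^ (n ^ 2 / 4) := Finset.sum_le_sum fun k _ => by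
        have hk : (k : ℕ) ≤ n := Nat.lt_succ_iff.1 k.isLt
        calc A ^ (k : ℕ) * (q ^ (k : ℕ) * A) ^ (n - k) = A ^ n * q ^ (k * (n - k)) := by
              rw [mul_pow, ← pow_mul, mul_left_comm, ← pow_add, Nat.add_sub_cancel' hk, mul_comm]
          _ ≤ A ^ n * q ^ (n ^ 2 / 4) :=
              Nat.mul_le_mul_left _ (Nat.pow_le_pow_right hq (mul_sub_le_sq_div_four hk))
    _ = A ^ n * ((n + 1) * q ^ (n ^ 2 / 4)) := by
        simp only [Finset.sum_const, Finset.card_univ, Fintype.card_fin, smul_eq_mul]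
        ring

theorem gl_bn_le_general {F : Type*} [Field F] [Fintype F] {Φ : Type*}
    (w : Φ → ℕ) (vac : Φ)
    (hvac : ∀ a : Φ, w a = 0 ↔ a = vac)
    (hfin : ∀ n : ℕ, {a : Φ | w a ≤ n}.Finite)
    (N n : ℕ) :
    numOrbitsOn (GL (Fin N) F) {f : (Fin N → F) → Φ | ∑ v : Fin N → F, w (f v) = n}
      ≤ Nat.card {a : Φ | w a ≤ n} ^ n * ((n + 1) * Fintype.card F ^ (n ^ 2 / 4)) := by
  classical
  have := (hfin n).to_subtype
  let Y := {a : Φ | w a ≤ n}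
  let y₀ : Y := ⟨vac, by simp [Y, (hvac vac).2 rfl]⟩
  calc _ ≤ Nat.card (Σ k : Fin (n + 1), (Fin k → Y) × (Fin (n - k) → (Fin k → F) × Y)) := by
        refine numOrbitsOn_le_card (fun t => Subtype.val ∘ normalForm N y₀ t.2.1 t.2.2)
          fun f (hf : ∑ v, w (f v) = n) => ?_
        lift f to (Fin N → F) → Y using fun v => show w (f v) ≤ n from
          hf ▸ Finset.single_le_sum (f := w ∘ f) (fun _ _ => Nat.zero_le _) (Finset.mem_univ v)
        have hsupp : {v | f v ≠ y₀}.ncard ≤ n := by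
          simpa [Subtype.ext_iff, y₀, hf] using ncard_ne_le_sum hvac (Subtype.val ∘ f)
        obtain ⟨k, hk, a, s, hrel⟩ := exists_orbitRel_normalForm hsupp
        exact ⟨⟨⟨k, by omega⟩, a, s⟩, orbitRel_comp Subtype.val hrel⟩
    _ = ∑ k : Fin (n + 1),
          Nat.card Y ^ (k : ℕ) * (Fintype.card F ^ (k : ℕ) * Nat.card Y) ^ (n - k) := by
        simp [Nat.card_sigma, Nat.card_prod, Nat.card_fun]
    _ ≤ _ := sum_pow_mul_pow_sub_le _ _ _ Fintype.card_pos

/-- The number `b_n` of orbits of `GL(N,F)` on functions `F^N → Φ` of total weight `n`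
is at most `A(n)^n · (n+1) · q^⌊n²/4⌋`. -/
theorem gl_bn_le {F : Type*} [Field F] [Fintype F] [DecidableEq F] {Φ : Type*}
    (w : Φ → ℕ) (vac : Φ)
    (hvac : ∀ a : Φ, w a = 0 ↔ a = vac)
    (hfin : ∀ n : ℕ, {a : Φ | w a ≤ n}.Finite)
    (N n : ℕ) (hn : n ≤ N) :
    numOrbitsOn (GL (Fin N) F) {f : (Fin N → F) → Φ | ∑ v : Fin N → F, w (f v) = n}
      ≤ Nat.card {a : Φ | w a ≤ n} ^ n * ((n + 1) * Fintype.card F ^ (n ^ 2 / 4)) :=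
  gl_bn_le_general w vac hvac hfin N n
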